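/- For the 4-qubit translationally invariant state |ψ⟩ = (|0101⟩ + |1010⟩)/√2, the maximum overlap with product states |a⟩|b⟩|c⟩|d⟩ is 1/√2, attained at the non-symmetric states |0101⟩ and |1010⟩; moreover the maximum overlap with symmetric product states |a⟩|a⟩|a⟩|a⟩ is strictly smaller than 1/√2. -/

import Mathlib

open scoped BigOperators

/-- The coefficients of the translationally invariant 4-qubit state
(|0101⟩ + |1010⟩)/√2. -/
noncomputable def psi1010 : (Fin 4 → Fin 2) → ℂ := fun s =>
  if s = ![0, 1, 0, 1] ∨ s = ![1, 0, 1, 0] then (1 / Real.sqrt 2 : ℝ) else 0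

/-- The overlap of the state with the product state |a⟩|b⟩|c⟩|d⟩. -/
noncomputable def overlap1010 (a b c d : Fin 2 → ℂ) : ℝ :=
  ‖∑ s : Fin 4 → Fin 2, psi1010 s *
    (starRingEnd ℂ) (a (s 0)) * (starRingEnd ℂ) (b (s 1)) *
    (starRingEnd ℂ) (c (s 2)) * (starRingEnd ℂ) (d (s 3))‖

/-!
Only the basis strings 0101 and 1010 contribute, so the overlap is
`|a₀b₁c₀d₁ + a₁b₀c₁d₀| / √2`. Bounding each product by AM-GM and pairing terms via
Cauchy–Schwarz, `|a₀c₀|² + |a₁c₁|² ≤ 1`, shows the amplitude is at most 1, with equality at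
|0101⟩. For a symmetric state the amplitude is `2 a₀² a₁²`, whose modulus is at most `1/2`
since `4|a₀|²|a₁|² ≤ (|a₀|² + |a₁|²)² = 1`.
-/

def amp1010 (a b c d : Fin 2 → ℂ) : ℂ :=
  a 0 * b 1 * c 0 * d 1 + a 1 * b 0 * c 1 * d 0

lemma overlap1010_eq (a b c d : Fin 2 → ℂ) :
    overlap1010 a b c d = ‖amp1010 a b c d‖ / Real.sqrt 2 := by
  rw [overlap1010, amp1010, Fintype.sum_eq_add ![0, 1, 0, 1] ![1, 0, 1, 0] (by decide)
    (fun s hs => by simp [psi1010, hs.1, hs.2])]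
  simp only [psi1010, Matrix.cons_val, true_or, or_true, if_true, mul_assoc, ← mul_add,
    ← map_mul, ← map_add, norm_mul, Complex.norm_conj, Complex.norm_real]
  rw [Real.norm_of_nonneg (by positivity)]
  ring

theorem mul_add_mul_le_one_of_sq_add_sq {x₀ x₁ y₀ y₁ z₀ z₁ w₀ w₁ : ℝ}
    (hx : x₀ ^ 2 + x₁ ^ 2 = 1) (hy : y₀ ^ 2 + y₁ ^ 2 = 1)
    (hz : z₀ ^ 2 + z₁ ^ 2 = 1) (hw : w₀ ^ 2 + w₁ ^ 2 = 1) :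
    x₀ * y₁ * z₀ * w₁ + x₁ * y₀ * z₁ * w₀ ≤ 1 := by
  nlinarith [sq_nonneg (x₀ * z₀ - y₁ * w₁), sq_nonneg (x₁ * z₁ - y₀ * w₀),
    sq_nonneg (x₀ * z₁), sq_nonneg (x₁ * z₀), sq_nonneg (y₀ * w₁), sq_nonneg (y₁ * w₀)]

theorem two_mul_sq_mul_sq_le_half {p q : ℝ} (h : p ^ 2 + q ^ 2 = 1) : 2 * p ^ 2 * q ^ 2 ≤ 1 / 2 := by
  nlinarith [sq_nonneg (p ^ 2 - q ^ 2)]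

lemma norm_amp1010_le_one {a b c d : Fin 2 → ℂ}
    (ha : ∑ i, ‖a i‖ ^ 2 = 1) (hb : ∑ i, ‖b i‖ ^ 2 = 1)
    (hc : ∑ i, ‖c i‖ ^ 2 = 1) (hd : ∑ i, ‖d i‖ ^ 2 = 1) :
    ‖amp1010 a b c d‖ ≤ 1 := by
  rw [Fin.sum_univ_two] at ha hb hc hd
  rw [amp1010]
  refine (norm_add_le _ _).trans ?_
  simp only [norm_mul]
  exact mul_add_mul_le_one_of_sq_add_sq ha hb hc hd

lemma norm_amp1010_self_le_half {a : Fin 2 → ℂ} (ha : ∑ i, ‖a i‖ ^ 2 = 1) :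
    ‖amp1010 a a a a‖ ≤ 1 / 2 := by
  rw [Fin.sum_univ_two] at ha
  rw [show amp1010 a a a a = 2 * a 0 ^ 2 * a 1 ^ 2 by rw [amp1010]; ring]
  simpa only [norm_mul, norm_pow, Complex.norm_ofNat] using two_mul_sq_mul_sq_le_half ha

theorem stmt_11 :
    IsGreatest {x : ℝ | ∃ a b c d : Fin 2 → ℂ,
        (∑ i, ‖a i‖ ^ 2 = 1) ∧ (∑ i, ‖b i‖ ^ 2 = 1) ∧
        (∑ i, ‖c i‖ ^ 2 = 1) ∧ (∑ i, ‖d i‖ ^ 2 = 1) ∧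
        x = overlap1010 a b c d} (1 / Real.sqrt 2) ∧
    overlap1010 ![1, 0] ![0, 1] ![1, 0] ![0, 1] = 1 / Real.sqrt 2 ∧
    overlap1010 ![0, 1] ![1, 0] ![0, 1] ![1, 0] = 1 / Real.sqrt 2 ∧
    (∀ a : Fin 2 → ℂ, (∑ i, ‖a i‖ ^ 2 = 1) →
      overlap1010 a a a a < 1 / Real.sqrt 2) := by
  have h0101 : overlap1010 ![1, 0] ![0, 1] ![1, 0] ![0, 1] = 1 / Real.sqrt 2 := by
    simp [overlap1010_eq, amp1010]
  have h1010 : overlap1010 ![0, 1] ![1, 0] ![0, 1] ![1, 0] = 1 / Real.sqrt 2 := by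
    simp [overlap1010_eq, amp1010]
  have he₀ : ∑ i, ‖(![1, 0] : Fin 2 → ℂ) i‖ ^ 2 = 1 := by simp
  have he₁ : ∑ i, ‖(![0, 1] : Fin 2 → ℂ) i‖ ^ 2 = 1 := by simp
  refine ⟨⟨⟨_, _, _, _, he₀, he₁, he₀, he₁, h0101.symm⟩, ?_⟩, h0101, h1010, ?_⟩
  · rintro x ⟨a, b, c, d, ha, hb, hc, hd, rfl⟩
    rw [overlap1010_eq]
    gcongr
    exact norm_amp1010_le_one ha hb hc hd
  · intro a ha
    rw [overlap1010_eq]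
    gcongr
    exact (norm_amp1010_self_le_half ha).trans_lt (by norm_num)
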